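/- arXiv:2104.11540 — 3 statements merged into one kernel-verified Lean document; each statement's English description precedes it below -/
import Mathlib

section
/- Let V be a nonzero finite-dimensional complex vector space and let A : V → V be a linear endomorphism whose characteristic polynomial splits as ∏ᵢ (X − nᵢ) where every root nᵢ is a positive integer. Suppose g : V → V is an invertible linear map and ζ ∈ ℂ is a root of unity (ζ^m = 1 for some positive integer m) such that g ∘ A ∘ g⁻¹ = ζ · A. Then ζ = 1. -/
open Polynomial

/-- Let `V` be a nonzero finite-dimensional complex vector space and `A : V → V` a linear
endomorphism whose characteristic polynomial splits as `∏ᵢ (X - nᵢ)` with every root `nᵢ` a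
positive integer.  If `g : V ≃ V` is an invertible linear map and `ζ` is a root of unity with
`g ∘ A ∘ g⁻¹ = ζ • A`, then `ζ = 1`. -/
theorem statement0
    (V : Type*) [AddCommGroup V] [Module ℂ V] [FiniteDimensional ℂ V] [Nontrivial V]
    (A : V →ₗ[ℂ] V)
    (s : Multiset ℕ)
    (hs_pos : ∀ n ∈ s, 0 < n)
    (hchar : LinearMap.charpoly A = (s.map fun n => X - C (n : ℂ)).prod)
    (g : V ≃ₗ[ℂ] V) (ζ : ℂ)
    (hζ : ∃ m : ℕ, 0 < m ∧ ζ ^ m = 1)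
    (hconj : (g : V →ₗ[ℂ] V) ∘ₗ A ∘ₗ (g.symm : V →ₗ[ℂ] V) = ζ • A) :
    ζ = 1 := by
  classical
  set t : Multiset ℂ := s.map (fun n : ℕ => (n : ℂ)) with ht
  have hchar' : LinearMap.charpoly A = (t.map fun x => X - C x).prod := by
    rw [hchar, ht, Multiset.map_map]
    simp [Function.comp]

  have hfin : 0 < Module.finrank ℂ V := Module.finrank_pos
  have hcard : Multiset.card t = Module.finrank ℂ V := by
    have := A.charpoly_natDegree
    rw [hchar'] at this
    rw [← this, natDegree_multiset_prod_of_monic]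
    · simp
    · intro f hf
      obtain ⟨x, -, rfl⟩ := Multiset.mem_map.mp hf
      exact monic_X_sub_C x
  have hcardt : 0 < Multiset.card t := hcard ▸ hfin
  -- trace A = t.sum
  have htrace : LinearMap.trace ℂ V A = t.sum := by
    let b := Module.finBasis ℂ V
    have : Nonempty (Fin (Module.finrank ℂ V)) := Fin.pos_iff_nonempty.mp hfin
    rw [LinearMap.trace_eq_matrix_trace ℂ b, Matrix.trace_eq_neg_charpoly_coeff,
      LinearMap.charpoly_toMatrix A b, hchar', Fintype.card_fin, ← hcard,
      Polynomial.multiset_prod_X_sub_C_coeff_card_pred t hcardt, neg_neg]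
  have hsum : t.sum ≠ 0 := by
    have hsnat : 0 < s.sum := by
      rcases Multiset.card_pos_iff_exists_mem.mp (by simpa [ht] using hcardt) with ⟨x, hx⟩
      exact lt_of_lt_of_le (hs_pos x hx) (Multiset.single_le_sum (fun a _ => Nat.zero_le a) x hx)
    have : t.sum = (s.sum : ℂ) := by
      rw [ht]; exact (Nat.cast_multiset_sum s).symm
    rw [this]
    exact_mod_cast hsnat.ne'
  have hconj' : g.conj A = ζ • A := by
    ext v
    have := LinearMap.congr_fun hconj v
    simpa [LinearEquiv.conj_apply] using this
  have htr : LinearMap.trace ℂ V (g.conj A) = LinearMap.trace ℂ V A :=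
    LinearMap.trace_conj' A g
  rw [hconj', map_smul, htrace, smul_eq_mul] at htr
  exact mul_right_cancel₀ hsum (htr.trans (one_mul t.sum).symm)
end

section
/- Let I ⊆ (0, 1] be a set of real numbers satisfying the descending chain condition. Then there exists a finite subset J ⊆ I with the following property: for every integer g ≥ 0, every finite index set S, and every family (a_i)_{i ∈ S} of elements of I with 2g − 2 + Σ_{i ∈ S} a_i > 0, there exists a family (b_i)_{i ∈ S} of real numbers such that each b_i is either 0 or an element of J, b_i ≤ a_i for every i ∈ S, and 2g − 2 + Σ_{i ∈ S} b_i > 0. -/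
open Pointwise

/-- A set `I ⊆ ℝ` satisfies the descending chain condition (DCC) if every non-increasing
sequence of elements of `I` is eventually constant. -/
def SatisfiesDCC (I : Set ℝ) : Prop :=
  ∀ f : ℕ → ℝ, (∀ n, f n ∈ I) → Antitone f → ∃ N, ∀ n ≥ N, f n = f N

lemma dcc_isWF {I : Set ℝ} (hDCC : SatisfiesDCC I) : I.IsWF := by
  rw [Set.isWF_iff_no_descending_seq]
  intro f hf hmem
  obtain ⟨N, hN⟩ := hDCC f hmem hf.antitone
  have h1 := hf (Nat.lt_succ_self N)
  rw [hN (N + 1) (Nat.le_succ N)] at h1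
  exact lt_irrefl _ h1

/-- The set of sums of `k` elements of `I`. -/
def sumSet (I : Set ℝ) : ℕ → Set ℝ
  | 0 => {0}
  | (k + 1) => I + sumSet I k

lemma sumSet_isWF {I : Set ℝ} (hWF : I.IsWF) : ∀ k, (sumSet I k).IsWF
  | 0 => (Set.finite_singleton 0).isWF
  | (k + 1) => hWF.add (sumSet_isWF hWF k)

lemma sum_mem_sumSet {I : Set ℝ} {ι : Type*} [DecidableEq ι] (s : Finset ι) (c : ι → ℝ)
    (hc : ∀ i ∈ s, c i ∈ I) : ∑ i ∈ s, c i ∈ sumSet I s.card := by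
  classical
  induction s using Finset.induction_on with
  | empty => simp [sumSet]
  | @insert a s ha ih =>
    rw [Finset.sum_insert ha, Finset.card_insert_of_notMem ha]
    exact Set.add_mem_add (hc a (Finset.mem_insert_self a s))
      (ih fun i hi => hc i (Finset.mem_insert_of_mem hi))

/-- The set of sums of at most `k` elements of `I`. -/
def cumSet (I : Set ℝ) : ℕ → Set ℝ
  | 0 => sumSet I 0
  | (k + 1) => cumSet I k ∪ sumSet I (k + 1)

lemma cumSet_isWF {I : Set ℝ} (hWF : I.IsWF) : ∀ k, (cumSet I k).IsWF
  | 0 => sumSet_isWF hWF 0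
  | (k + 1) => (cumSet_isWF hWF k).union (sumSet_isWF hWF (k + 1))

lemma sumSet_subset_cumSet {I : Set ℝ} : ∀ {j k : ℕ}, j ≤ k → sumSet I j ⊆ cumSet I k := by
  intro j k
  induction k with
  | zero => intro h; rw [Nat.le_zero] at h; subst h; exact subset_rfl
  | succ k ih =>
    intro h
    rcases Nat.lt_succ_iff_lt_or_eq.mp (Nat.lt_succ_of_le h) with h' | h'
    · exact (ih (Nat.lt_succ_iff.mp h')).trans Set.subset_union_left
    · subst h'; exact Set.subset_union_right

/-- Let `I ⊆ (0, 1]` satisfy the DCC.  Then there is a finite subset `J ⊆ I` such that: for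
every integer `g ≥ 0`, every finite index set and family `(aᵢ)` of elements of `I` with
`2g - 2 + ∑ᵢ aᵢ > 0`, there is a family `(bᵢ)` of reals, each `bᵢ` either `0` or in `J`, with
`bᵢ ≤ aᵢ` for all `i` and `2g - 2 + ∑ᵢ bᵢ > 0`. -/
theorem statement3 (I : Set ℝ) (hI : I ⊆ Set.Ioc 0 1) (hDCC : SatisfiesDCC I) :
    ∃ J : Finset ℝ, ↑J ⊆ I ∧
      ∀ (g : ℕ) (n : ℕ) (a : Fin n → ℝ), (∀ i, a i ∈ I) →
        2 * (g : ℝ) - 2 + ∑ i, a i > 0 →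
        ∃ b : Fin n → ℝ, (∀ i, b i = 0 ∨ b i ∈ J) ∧ (∀ i, b i ≤ a i) ∧
          2 * (g : ℝ) - 2 + ∑ i, b i > 0 := by
  classical
  rcases Set.eq_empty_or_nonempty I with hIe | hIne
  · -- I empty: only n = 0 can occur
    refine ⟨∅, by simp, ?_⟩
    intro g n a ha hsum
    rcases Nat.eq_zero_or_pos n with rfl | hn
    · exact ⟨a, fun i => i.elim0, fun i => le_refl _, hsum⟩
    · exact absurd (ha ⟨0, hn⟩) (by simp [hIe])
  have hWF : I.IsWF := dcc_isWF hDCC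
  -- minimum of I
  set m : ℝ := hWF.min hIne with hm_def
  have hmI : m ∈ I := hWF.min_mem hIne
  have hm_le : ∀ x ∈ I, m ≤ x := fun x hx => hWF.min_le hIne hx
  have hm_pos : 0 < m := (hI hmI).1
  -- bound on the number of needed indices
  set k0 : ℕ := ⌊2 / m⌋₊ + 1 with hk0_def
  have hk0_pos : 0 < k0 := Nat.succ_pos _
  have hk0m : 2 < (k0 : ℝ) * m := by
    have h1 : 2 / m < (k0 : ℝ) := by
      have := Nat.lt_floor_add_one (2 / m)
      simpa [hk0_def] using this
    calc 2 = 2 / m * m := by field_simp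
    _ < (k0 : ℝ) * m := by exact mul_lt_mul_of_pos_right h1 hm_pos
  -- uniform margin above 2
  set U : Set ℝ := cumSet I k0 ∩ Set.Ioi (2 : ℝ) with hU_def
  have hUWF : U.IsWF := (cumSet_isWF hWF k0).mono Set.inter_subset_left
  set δ : ℝ := if h : U.Nonempty then hUWF.min h - 2 else 1 with hδ_def
  have hδ_pos : 0 < δ := by
    rw [hδ_def]
    split_ifs with h
    · have := (hUWF.min_mem h)
      have h2 : hUWF.min h ∈ Set.Ioi (2 : ℝ) := this.2
      simpa using h2
    · norm_num
  have hδ_le : ∀ x ∈ cumSet I k0, 2 < x → 2 + δ ≤ x := by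
    intro x hx h2x
    have hxU : x ∈ U := ⟨hx, h2x⟩
    rw [hδ_def]
    rw [dif_pos ⟨x, hxU⟩]
    have := hUWF.min_le ⟨x, hxU⟩ hxU
    linarith
  -- bucket width
  set ε : ℝ := δ / (2 * k0) with hε_def
  have hε_pos : 0 < ε := by
    apply div_pos hδ_pos
    positivity
  have hk0ε : (k0 : ℝ) * ε = δ / 2 := by
    rw [hε_def]
    field_simp
  -- buckets and their minima
  set L : ℕ := ⌈1 / ε⌉₊ with hL_def
  set μ : ℕ → ℝ := fun l =>
    if h : (I ∩ Set.Ioc (l * ε) ((l + 1) * ε)).Nonempty then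
      ((hWF.mono Set.inter_subset_left).min h) else m with hμ_def
  have hμI : ∀ l, μ l ∈ I := by
    intro l
    rw [hμ_def]
    dsimp only
    split_ifs with h
    · exact ((hWF.mono Set.inter_subset_left).min_mem h).1
    · exact hmI
  set J : Finset ℝ := (Finset.range L).image μ with hJ_def
  have hJI : (↑J : Set ℝ) ⊆ I := by
    intro x hx
    rw [hJ_def] at hx
    simp only [Finset.coe_image, Set.mem_image, Finset.mem_coe, Finset.mem_range] at hx
    obtain ⟨l, _, rfl⟩ := hx
    exact hμI l
  -- the rounding function
  set r : ℝ → ℝ := fun x => μ (⌈x / ε⌉₊ - 1) with hr_def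
  have hround : ∀ x ∈ I, r x ∈ I ∧ r x ∈ J ∧ r x ≤ x ∧ x - ε < r x := by
    intro x hxI
    obtain ⟨hx0, hx1⟩ := hI hxI
    have hxε_pos : 0 < x / ε := div_pos hx0 hε_pos
    have hc1 : 1 ≤ ⌈x / ε⌉₊ := Nat.one_le_iff_ne_zero.mpr (by
      have := Nat.ceil_pos.mpr hxε_pos; omega)
    set l : ℕ := ⌈x / ε⌉₊ - 1 with hl_def
    have hl1 : l + 1 = ⌈x / ε⌉₊ := by omega
    have hlcast : (l : ℝ) = (⌈x / ε⌉₊ : ℝ) - 1 := by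
      rw [hl_def]; push_cast [Nat.cast_sub hc1]; ring
    have hxle : x ≤ (l + 1 : ℝ) * ε := by
      have h1 : x / ε ≤ (⌈x / ε⌉₊ : ℝ) := Nat.le_ceil _
      have h2 : ((l : ℝ) + 1) = (⌈x / ε⌉₊ : ℝ) := by rw [hlcast]; ring
      rw [h2]
      calc x = x / ε * ε := by field_simp
      _ ≤ (⌈x / ε⌉₊ : ℝ) * ε := mul_le_mul_of_nonneg_right h1 hε_pos.le
    have hxgt : (l : ℝ) * ε < x := by
      have h1 : (⌈x / ε⌉₊ : ℝ) < x / ε + 1 := Nat.ceil_lt_add_one hxε_pos.le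
      have h2 : (l : ℝ) < x / ε := by rw [hlcast]; linarith
      calc (l : ℝ) * ε < x / ε * ε := mul_lt_mul_of_pos_right h2 hε_pos
      _ = x := by field_simp
    have hne : (I ∩ Set.Ioc ((l : ℝ) * ε) ((l + 1) * ε)).Nonempty :=
      ⟨x, hxI, hxgt, hxle⟩
    have hrx : r x = (hWF.mono Set.inter_subset_left).min hne := by
      rw [hr_def, hμ_def]
      dsimp only
      rw [← hl_def, dif_pos hne]
    have hmem := (hWF.mono Set.inter_subset_left).min_mem hne
    have hrI : r x ∈ I := by rw [hrx]; exact hmem.1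
    have hrle : r x ≤ x := by
      rw [hrx]
      exact (hWF.mono Set.inter_subset_left).min_le hne ⟨hxI, hxgt, hxle⟩
    have hrgt : x - ε < r x := by
      have h1 : (l : ℝ) * ε < r x := by rw [hrx]; exact hmem.2.1
      have h2 : x - ε ≤ (l : ℝ) * ε := by
        have : x ≤ ((l : ℝ) + 1) * ε := by push_cast at hxle ⊢; linarith
        nlinarith
      linarith
    have hlL : l < L := by
      have hceil : ⌈x / ε⌉₊ ≤ ⌈1 / ε⌉₊ :=
        Nat.ceil_le_ceil (by gcongr)
      rw [hL_def]; omega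
    have hrJ : r x ∈ J := by
      have hrl : r x = μ l := by rw [hr_def]
      rw [hJ_def, hrl]
      exact Finset.mem_image_of_mem μ (Finset.mem_range.mpr hlL)
    exact ⟨hrI, hrJ, hrle, hrgt⟩
  refine ⟨J, hJI, ?_⟩
  intro g n a ha hsum
  rcases Nat.eq_zero_or_pos n with rfl | hn
  · exact ⟨a, fun i => i.elim0, fun i => le_refl _, hsum⟩
  have ha_pos : ∀ i, 0 < a i := fun i => (hI (ha i)).1
  match g with
  | (g + 2) =>
    refine ⟨fun _ => 0, fun i => Or.inl rfl, fun i => (ha_pos i).le, ?_⟩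
    have hg : (0 : ℝ) ≤ (g : ℝ) := Nat.cast_nonneg g
    push_cast
    simp only [Finset.sum_const_zero]
    linarith
  | 1 =>
    refine ⟨fun i => r (a i), fun i => Or.inr (hround _ (ha i)).2.1,
      fun i => (hround _ (ha i)).2.2.1, ?_⟩
    have : Nonempty (Fin n) := ⟨⟨0, hn⟩⟩
    have hpos : 0 < ∑ i, r (a i) :=
      Finset.sum_pos (fun i _ => (hI (hround _ (ha i)).1).1) Finset.univ_nonempty
    push_cast
    linarith
  | 0 =>
    have hsum2 : 2 < ∑ i, a i := by push_cast at hsum; linarith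
    -- choose a subset of at most k0 indices whose sum still exceeds 2
    obtain ⟨s, hcard, hA⟩ : ∃ s : Finset (Fin n), s.card ≤ k0 ∧ 2 < ∑ i ∈ s, a i := by
      by_cases hnk : n ≤ k0
      · refine ⟨Finset.univ, ?_, hsum2⟩
        simpa using hnk
      · have hk0n : k0 ≤ (Finset.univ : Finset (Fin n)).card := by
          simp only [Finset.card_univ, Fintype.card_fin]
          omega
        obtain ⟨s, _, hscard⟩ := Finset.exists_subset_card_eq hk0n
        refine ⟨s, hscard.le, ?_⟩
        have h1 : ∑ _i ∈ s, m ≤ ∑ i ∈ s, a i :=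
          Finset.sum_le_sum fun i _ => hm_le _ (ha i)
        rw [Finset.sum_const, hscard, nsmul_eq_mul] at h1
        linarith
    -- the sum over s is in cumSet, hence at least 2 + δ
    have hAin : (∑ i ∈ s, a i) ∈ cumSet I k0 :=
      sumSet_subset_cumSet hcard (sum_mem_sumSet s a fun i _ => ha i)
    have hAδ := hδ_le _ hAin hA
    refine ⟨fun i => if i ∈ s then r (a i) else 0, ?_, ?_, ?_⟩
    · intro i
      by_cases hi : i ∈ s
      · simp only [if_pos hi]
        exact Or.inr (hround _ (ha i)).2.1
      · exact Or.inl (if_neg hi)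
    · intro i
      by_cases hi : i ∈ s
      · simp only [if_pos hi]
        exact (hround _ (ha i)).2.2.1
      · simp only [if_neg hi]
        exact (ha_pos i).le
    · have hbsum : ∑ i, (if i ∈ s then r (a i) else 0) = ∑ i ∈ s, r (a i) := by
        rw [Finset.sum_ite_mem, Finset.univ_inter]
      have h1 : ∑ i ∈ s, (a i - ε) ≤ ∑ i ∈ s, r (a i) :=
        Finset.sum_le_sum fun i _ => (hround _ (ha i)).2.2.2.le
      rw [Finset.sum_sub_distrib, Finset.sum_const, nsmul_eq_mul] at h1
      have h2 : (s.card : ℝ) * ε ≤ (k0 : ℝ) * ε := by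
        apply mul_le_mul_of_nonneg_right _ hε_pos.le
        exact_mod_cast hcard
      rw [hk0ε] at h2
      push_cast
      rw [hbsum]
      linarith
end

section
/- Let I ⊆ [0, 1] be a set of real numbers satisfying the descending chain condition and let m be a positive integer. Then there exists a finite subset J ⊆ I such that for every a ∈ I there exists b ∈ J with b ≤ a and a − b < 1/m. -/
/-!
Cut `[0, 1]` into the `m + 1` pieces on which `⌊m a⌋` is constant; each piece has length
`1 / m` and is closed on the left only, so two points of `I` in the same piece are less than
`1 / m` apart. By DCC each nonempty piece contains a least element of `I`, and these finitely
many minima form `J`.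
-/

theorem SatisfiesDCC.isWF {I : Set ℝ} (h : SatisfiesDCC I) : I.IsWF := by
  rw [Set.isWF_iff_no_descending_seq]
  intro f hf hmem
  obtain ⟨N, hN⟩ := h f hmem hf.antitone
  exact (hf N.lt_succ_self).ne (hN (N + 1) N.le_succ)

/-- `J` consists of the least elements of the fibres of `f` in `s`. -/
theorem Set.IsWF.exists_finset_le_of_finite_image {α β : Type*} [LinearOrder α] {s : Set α}
    (hs : s.IsWF) {f : α → β} (hf : (f '' s).Finite) :
    ∃ J : Finset α, ↑J ⊆ s ∧ ∀ a ∈ s, ∃ b ∈ J, b ≤ a ∧ f b = f a := by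
  set M := {b ∈ s | ∀ a ∈ s, f a = f b → b ≤ a}
  have hM : M.Finite := by
    refine (hf.subset (Set.image_mono fun b hb ↦ hb.1)).of_finite_image ?_
    exact fun b hb b' hb' hbb' ↦ le_antisymm (hb.2 b' hb'.1 hbb'.symm) (hb'.2 b hb.1 hbb')
  refine ⟨hM.toFinset, by rw [hM.coe_toFinset]; exact Set.sep_subset _ _, fun a ha ↦ ?_⟩
  have hfib : (s ∩ f ⁻¹' {f a}).IsWF := hs.mono Set.inter_subset_left
  have hne : (s ∩ f ⁻¹' {f a}).Nonempty := ⟨a, ha, rfl⟩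
  obtain ⟨hbs, hba⟩ := hfib.min_mem hne
  refine ⟨hfib.min hne, ?_, hfib.min_le hne ⟨ha, rfl⟩, hba⟩
  refine hM.mem_toFinset.2 ⟨hbs, fun a' ha' h ↦ hfib.min_le hne ⟨ha', ?_⟩⟩
  exact h.trans hba

theorem sub_lt_one_div_of_floor_mul_eq {a b : ℝ} {m : ℕ} (hm : 0 < m)
    (h : ⌊b * m⌋ = ⌊a * m⌋) : a - b < 1 / m := by
  have hm' : (0 : ℝ) < m := by exact_mod_cast hm
  rw [lt_div_iff₀ hm', sub_mul]
  exact (abs_lt.1 (Int.abs_sub_lt_one_of_floor_eq_floor h.symm)).2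

theorem finite_image_floor_mul {I : Set ℝ} (hI : I ⊆ Set.Icc 0 1) (m : ℕ) :
    ((fun a : ℝ ↦ ⌊a * m⌋) '' I).Finite := by
  refine (Set.finite_Icc (0 : ℤ) m).subset ?_
  rintro _ ⟨a, ha, rfl⟩
  obtain ⟨ha0, ha1⟩ := hI ha
  exact ⟨Int.floor_nonneg.2 (by positivity),
    (Int.floor_mono (mul_le_of_le_one_left m.cast_nonneg ha1)).trans (Int.floor_natCast m).le⟩

/-- Let `I ⊆ [0, 1]` satisfy the DCC and let `m` be a positive integer.  Then there exists a
finite subset `J ⊆ I` such that every `a ∈ I` admits `b ∈ J` with `b ≤ a` and `a - b < 1/m`. -/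
theorem statement4 (I : Set ℝ) (hI : I ⊆ Set.Icc 0 1) (hDCC : SatisfiesDCC I)
    (m : ℕ) (hm : 0 < m) :
    ∃ J : Finset ℝ, ↑J ⊆ I ∧ ∀ a ∈ I, ∃ b ∈ J, b ≤ a ∧ a - b < 1 / (m : ℝ) := by
  obtain ⟨J, hJI, hJ⟩ := hDCC.isWF.exists_finset_le_of_finite_image (finite_image_floor_mul hI m)
  refine ⟨J, hJI, fun a ha ↦ ?_⟩
  obtain ⟨b, hbJ, hba, hfloor⟩ := hJ a ha
  exact ⟨b, hbJ, hba, sub_lt_one_div_of_floor_mul_eq hm hfloor⟩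
end
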